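/- Let $C > 0$, $T > 0$, let $u: [0,T] \to [0,\infty)$ be continuous, and let $d: [0,T] \to [0,\infty)$ be integrable. Assume that for every $t \in [0,T]$, $u(t) + \int_0^t d(s)\,ds \le u(0) + C\int_0^t d(s)\sqrt{u(s)}\,ds$, and that $u(0) \le \frac{1}{4C^2}$. Then for every $t \in [0,T]$: $u(t) + \frac{1}{2}\int_0^t d(s)\,ds \le u(0)$. -/

import Mathlib

/-!
If `u ≤ 1/C²` on `[0, t]` then `C √u ≤ 1`, and the energy inequality gives `u t ≤ u 0 ≤ 1/(4C²)`,
strictly below the threshold `1/C²`; by continuity `u` can therefore never reach `1/C²`. Knowing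
`u ≤ u 0 ≤ 1/(4C²)` everywhere, `C √u ≤ 1/2`, and the energy inequality absorbs half of the
dissipation.
-/

open MeasureTheory Set

theorem ContinuousOn.le_of_bootstrap {f : ℝ → ℝ} {a b K L : ℝ} (hf : ContinuousOn f (Icc a b))
    (hLK : L < K) (ha : f a < K)
    (hstep : ∀ t ∈ Icc a b, (∀ s ∈ Icc a t, f s ≤ K) → f t ≤ L) :
    ∀ t ∈ Icc a b, f t ≤ L := by
  by_contra! ⟨t₀, ht₀, hLt₀⟩
  obtain ⟨s₀, hs₀, hKs₀⟩ : ∃ s ∈ Icc a t₀, K < f s := by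
    by_contra! h
    exact hLt₀.not_ge (hstep t₀ ht₀ h)
  -- `τ` is the first time `f` reaches `K`
  set B := Icc a b ∩ f ⁻¹' Ici K
  have hB_closed : IsClosed B := hf.preimage_isClosed_of_isClosed isClosed_Icc isClosed_Ici
  have hB_ne : B.Nonempty := ⟨s₀, ⟨hs₀.1, hs₀.2.trans ht₀.2⟩, hKs₀.le⟩
  have hB_bdd : BddBelow B := ⟨a, fun s hs => hs.1.1⟩
  set τ := sInf B
  obtain ⟨hτ, hKτ⟩ : τ ∈ B := hB_closed.csInf_mem hB_ne hB_bdd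
  have hbefore : ∀ s ∈ Ico a τ, f s < K := fun s hs => by
    by_contra! hKs
    exact hs.2.not_ge (csInf_le hB_bdd ⟨⟨hs.1, hs.2.le.trans hτ.2⟩, hKs⟩)
  have haτ : a < τ := hτ.1.lt_of_ne fun h => (h ▸ ha).not_ge hKτ
  have hfτ : f τ ≤ K := by
    refine ContinuousWithinAt.closure_le (s := Ico a τ) ?_ ?_ continuousWithinAt_const
      fun s hs => (hbefore s hs).le
    · rw [closure_Ico haτ.ne]; exact right_mem_Icc.2 haτ.le
    · exact (hf τ hτ).mono (Ico_subset_Icc_self.trans (Icc_subset_Icc_right hτ.2))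
  have hτL := hstep τ hτ fun s hs =>
    hs.2.eq_or_lt.elim (fun h => h ▸ hfτ) fun h => (hbefore s ⟨hs.1, h⟩).le
  exact (hτL.trans_lt hLK).not_ge hKτ

theorem mul_integral_mul_le_mul_integral {d h : ℝ → ℝ} {a b k θ : ℝ} (hab : a ≤ b)
    (hd : IntervalIntegrable d volume a b)
    (hdh : IntervalIntegrable (fun s => d s * h s) volume a b)
    (hd_nonneg : ∀ s ∈ Icc a b, 0 ≤ d s) (hkh : ∀ s ∈ Icc a b, k * h s ≤ θ) :
    k * ∫ s in a..b, d s * h s ≤ θ * ∫ s in a..b, d s := by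
  rw [← intervalIntegral.integral_const_mul, ← intervalIntegral.integral_const_mul]
  refine intervalIntegral.integral_mono_on hab (hdh.const_mul k) (hd.const_mul θ) fun s hs => ?_
  calc k * (d s * h s) = d s * (k * h s) := by ring
    _ ≤ d s * θ := mul_le_mul_of_nonneg_left (hkh s hs) (hd_nonneg s hs)
    _ = θ * d s := mul_comm _ _

theorem mul_sqrt_le {C θ x : ℝ} (hC : 0 < C) (hθ : 0 ≤ θ) (hx : x ≤ θ ^ 2 / C ^ 2) :
    C * √x ≤ θ := by
  rw [← le_div_iff₀' hC, Real.sqrt_le_iff, div_pow]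
  exact ⟨div_nonneg hθ hC.le, hx⟩

theorem energy_le_of_mul_sqrt_le {C θ t : ℝ} {u d : ℝ → ℝ} (ht : 0 ≤ t)
    (hu : ContinuousOn u (Icc 0 t)) (hd_nonneg : ∀ s ∈ Icc 0 t, 0 ≤ d s)
    (hd : IntegrableOn d (Icc 0 t))
    (hineq : u t + ∫ s in (0 : ℝ)..t, d s ≤ u 0 + C * ∫ s in (0 : ℝ)..t, d s * √(u s))
    (hθ : ∀ s ∈ Icc 0 t, C * √(u s) ≤ θ) :
    u t + (1 - θ) * ∫ s in (0 : ℝ)..t, d s ≤ u 0 := by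
  have hdI : IntervalIntegrable d volume 0 t :=
    (intervalIntegrable_iff_integrableOn_Icc_of_le ht).2 hd
  have hdsI : IntervalIntegrable (fun s => d s * √(u s)) volume 0 t :=
    hdI.mul_continuousOn <| by
      rw [uIcc_of_le ht]; exact Real.continuous_sqrt.comp_continuousOn hu
  have := mul_integral_mul_le_mul_integral ht hdI hdsI hd_nonneg hθ
  linarith

theorem bootstrap_energy_estimate_general (C T : ℝ) (hC : 0 < C)
    (u d : ℝ → ℝ)
    (hu_cont : ContinuousOn u (Set.Icc 0 T))
    (hd_nonneg : ∀ t ∈ Set.Icc 0 T, 0 ≤ d t)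
    (hd_int : IntegrableOn d (Set.Icc 0 T))
    (hineq : ∀ t ∈ Set.Icc 0 T,
      u t + ∫ s in (0 : ℝ)..t, d s ≤ u 0 + C * ∫ s in (0 : ℝ)..t, d s * Real.sqrt (u s))
    (hsmall : u 0 ≤ 1 / (4 * C ^ 2)) :
    ∀ t ∈ Set.Icc 0 T, u t + (1/2) * ∫ s in (0 : ℝ)..t, d s ≤ u 0 := by
  have henergy : ∀ t ∈ Icc 0 T, ∀ θ, (∀ s ∈ Icc 0 t, C * √(u s) ≤ θ) →
      u t + (1 - θ) * ∫ s in (0 : ℝ)..t, d s ≤ u 0 := fun t ht θ hθ =>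
    have hsub : Icc 0 t ⊆ Icc 0 T := Icc_subset_Icc_right ht.2
    energy_le_of_mul_sqrt_le ht.1 (hu_cont.mono hsub) (fun s hs => hd_nonneg s (hsub hs))
      (hd_int.mono_set hsub) (hineq t ht) hθ
  have hsmall' : u 0 ≤ (1 / 2) ^ 2 / C ^ 2 := by
    convert hsmall using 1; field_simp; norm_num
  have hthreshold : u 0 < 1 ^ 2 / C ^ 2 := hsmall'.trans_lt <| by gcongr; norm_num
  have hbound : ∀ t ∈ Icc 0 T, u t ≤ u 0 :=
    hu_cont.le_of_bootstrap hthreshold hthreshold fun t ht hK => by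
      simpa using henergy t ht 1 fun s hs => mul_sqrt_le hC zero_le_one (hK s hs)
  intro t ht
  convert henergy t ht (1 / 2) fun s hs =>
    mul_sqrt_le hC (by norm_num) ((hbound s ⟨hs.1, hs.2.trans ht.2⟩).trans hsmall') using 2
  norm_num

/-- Bootstrap lemma closing the uniform a priori energy estimate: if
`u(t) + ∫₀ᵗ d ≤ u(0) + C ∫₀ᵗ d √u` and `u(0) ≤ 1/(4C²)`, then
`u(t) + ½∫₀ᵗ d ≤ u(0)`. -/
theorem bootstrap_energy_estimate (C T : ℝ) (hC : 0 < C) (hT : 0 < T)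
    (u d : ℝ → ℝ)
    (hu_cont : ContinuousOn u (Set.Icc 0 T))
    (hu_nonneg : ∀ t ∈ Set.Icc 0 T, 0 ≤ u t)
    (hd_nonneg : ∀ t ∈ Set.Icc 0 T, 0 ≤ d t)
    (hd_int : IntegrableOn d (Set.Icc 0 T))
    (hineq : ∀ t ∈ Set.Icc 0 T,
      u t + ∫ s in (0 : ℝ)..t, d s ≤ u 0 + C * ∫ s in (0 : ℝ)..t, d s * Real.sqrt (u s))
    (hsmall : u 0 ≤ 1 / (4 * C ^ 2)) :
    ∀ t ∈ Set.Icc 0 T, u t + (1/2) * ∫ s in (0 : ℝ)..t, d s ≤ u 0 :=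
  bootstrap_energy_estimate_general C T hC u d hu_cont hd_nonneg hd_int hineq hsmall
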